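/- arXiv:1609.05248 — 2 statements merged into one kernel-verified Lean document; each statement's English description precedes it below -/
import Mathlib

section
/- If the subsystem unsafe sets are chosen as the projections of the full unsafe set, Lᵢ = projᵢ(L), then the constructed set BP₁(V₁(t)) ∩ BP₂(V₂(t)) contains the true backward reachable set V(t) (conservative over-approximation). -/
/-- Conservative over-approximation: with `Lᵢ = projᵢ '' L`, the constructed
set contains the true backward reachable set. -/
theorem brs_conservative {Z X₁ X₂ U U₁ U₂ : Type*}
    (proj₁ : Z → X₁) (proj₂ : Z → X₂)
    (ξ : Z → U → Z) (ξ₁ : X₁ → U₁ → X₁) (ξ₂ : X₂ → U₂ → X₂)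
    (ind₁ : U → U₁) (ind₂ : U → U₂)
    (hproj₁ : ∀ z u, proj₁ (ξ z u) = ξ₁ (proj₁ z) (ind₁ u))
    (hproj₂ : ∀ z u, proj₂ (ξ z u) = ξ₂ (proj₂ z) (ind₂ u))
    (hind₁ : Function.Surjective ind₁) (hind₂ : Function.Surjective ind₂)
    (L : Set Z) :
    {z : Z | ∀ u : U, ξ z u ∈ L} ⊆
      {z : Z | proj₁ z ∈ {x₁ : X₁ | ∀ u₁ : U₁, ξ₁ x₁ u₁ ∈ proj₁ '' L}} ∩
      {z : Z | proj₂ z ∈ {x₂ : X₂ | ∀ u₂ : U₂, ξ₂ x₂ u₂ ∈ proj₂ '' L}} := by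
  intro z hz
  constructor
  · intro u₁
    obtain ⟨u, rfl⟩ := hind₁ u₁
    exact ⟨ξ z u, hz u, hproj₁ z u⟩
  · intro u₂
    obtain ⟨u, rfl⟩ := hind₂ u₂
    exact ⟨ξ z u, hz u, hproj₂ z u⟩
end

section
/- For the concrete product-space projections, Theorem 1 holds: let Z = A₁ × A₂ × A₃, X₁ = A₁ × A₃, X₂ = A₂ × A₃, proj₁(a,b,c) = (a,c), proj₂(a,b,c) = (b,c). If trajectories satisfy the projection property and L = BP₁(L₁) ∩ BP₂(L₂), then V(t) = BP₁(V₁(t)) ∩ BP₂(V₂(t)). -/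
/-- Theorem 1 for the concrete product-space projections with shared control. -/
theorem brs_decomposition_product {A₁ A₂ A₃ U : Type*}
    (ξ : A₁ × A₂ × A₃ → U → A₁ × A₂ × A₃)
    (ξ₁ : A₁ × A₃ → U → A₁ × A₃) (ξ₂ : A₂ × A₃ → U → A₂ × A₃)
    (proj₁ : A₁ × A₂ × A₃ → A₁ × A₃) (proj₂ : A₁ × A₂ × A₃ → A₂ × A₃)
    (hp₁ : ∀ z : A₁ × A₂ × A₃, proj₁ z = (z.1, z.2.2))
    (hp₂ : ∀ z : A₁ × A₂ × A₃, proj₂ z = (z.2.1, z.2.2))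
    (hproj₁ : ∀ z u, proj₁ (ξ z u) = ξ₁ (proj₁ z) u)
    (hproj₂ : ∀ z u, proj₂ (ξ z u) = ξ₂ (proj₂ z) u)
    (L₁ : Set (A₁ × A₃)) (L₂ : Set (A₂ × A₃)) (L : Set (A₁ × A₂ × A₃))
    (hL : L = {z | proj₁ z ∈ L₁} ∩ {z | proj₂ z ∈ L₂}) :
    {z : A₁ × A₂ × A₃ | ∀ u : U, ξ z u ∈ L} =
      {z | proj₁ z ∈ {x₁ : A₁ × A₃ | ∀ u : U, ξ₁ x₁ u ∈ L₁}} ∩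
      {z | proj₂ z ∈ {x₂ : A₂ × A₃ | ∀ u : U, ξ₂ x₂ u ∈ L₂}} := by
  ext z
  simp only [Set.mem_setOf_eq, Set.mem_inter_iff, hL]
  constructor
  · intro h
    exact ⟨fun u => (hproj₁ z u) ▸ (h u).1, fun u => (hproj₂ z u) ▸ (h u).2⟩
  · rintro ⟨h1, h2⟩ u
    exact ⟨(hproj₁ z u).symm ▸ h1 u, (hproj₂ z u).symm ▸ h2 u⟩
end
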